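/- Hoffman's relation in depth one for interpolated double zeta values: for every integer k ≥ 2 and real parameter t, (1 + (k-1)·t) · ζ(k+1) = ∑_{j=2}^{k} ζ^t(j, k+1-j), where ζ^t(a,b) = ζ(a,b) + t·ζ(a+b). -/

import Mathlib

open Finset

/-- The Riemann zeta value `ζ(s) = ∑_{m ≥ 1} 1/m^s`. -/
noncomputable def zetaVal (s : ℕ) : ℝ :=
  ∑' m : ℕ, if 1 ≤ m then 1 / (m : ℝ) ^ s else 0

/-- The double zeta value `ζ(a,b) = ∑_{m > n ≥ 1} 1/(m^a n^b)`. -/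
noncomputable def doubleZeta (a b : ℕ) : ℝ :=
  ∑' p : ℕ × ℕ, if 1 ≤ p.2 ∧ p.2 < p.1 then 1 / ((p.1 : ℝ) ^ a * (p.2 : ℝ) ^ b) else 0

/-- The interpolated double zeta value `ζ^t(a,b) = ζ(a,b) + t·ζ(a+b)`. -/
noncomputable def tDoubleZeta (t : ℝ) (a b : ℕ) : ℝ :=
  doubleZeta a b + t * zetaVal (a + b)

/-
For `m = n + d` the geometric sum gives, pointwise in `n, d ≥ 1`,
`∑_{j=2}^k 1/(m^j n^(k+1-j)) + 1/(d m^k) = 1/(d m n^(k-1))`.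
Summing over `n, d` turns the left side into `∑_j ζ(j, k+1-j) + B` with
`B = ∑_{m > d ≥ 1} 1/(d m^k) = ∑_m H_(m-1)/m^k`, and, since `∑_d n/(d (n+d)) = H_n`, the right
side into `∑_n H_n/n^k = ζ(k+1) + B`. As `B < ∞` for `k ≥ 2`, `B` cancels: this is Euler's
`∑_{j=2}^k ζ(j, k+1-j) = ζ(k+1)`, and the `t`-part adds `(k-1) t ζ(k+1)`. All series have
nonnegative terms, so they are handled in `ℝ≥0∞`, where rearranging them is free.
-/

open Filter Topology ENNReal

section Reindex

variable {M : Type*} [AddCommMonoid M] [TopologicalSpace M]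

lemma tsum_ite_one_le (f : ℕ → M) :
    ∑' m, (if 1 ≤ m then f m else 0) = ∑' n, f (n + 1) := by
  rw [← (add_left_injective 1).tsum_eq (f := fun m ↦ if 1 ≤ m then f m else 0)]
  · simp
  · intro m hm
    exact ⟨m - 1, Nat.sub_add_cancel (not_not.1 fun h ↦ hm (if_neg h))⟩

lemma tsum_ite_one_le_lt (g : ℕ → ℕ → M) :
    ∑' p : ℕ × ℕ, (if 1 ≤ p.2 ∧ p.2 < p.1 then g p.1 p.2 else 0) =
      ∑' q : ℕ × ℕ, g (q.1 + 1 + (q.2 + 1)) (q.1 + 1) := by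
  have inj : Function.Injective fun q : ℕ × ℕ ↦ (q.1 + 1 + (q.2 + 1), q.1 + 1) := by
    intro q q' h
    simp only [Prod.mk.injEq] at h
    ext <;> omega
  rw [← inj.tsum_eq]
  · refine tsum_congr fun q ↦ ?_
    dsimp only
    rw [if_pos (by omega)]
  · intro p hp
    have : 1 ≤ p.2 ∧ p.2 < p.1 := not_not.1 fun h ↦ hp (if_neg h)
    exact ⟨(p.2 - 1, p.1 - p.2 - 1), Prod.ext (by simp only; omega) (by simp only; omega)⟩

end Reindex

lemma tsum_eq_toReal_tsum_ofReal {α : Type*} {f : α → ℝ} (hf : ∀ a, 0 ≤ f a) :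
    ∑' a, f a = (∑' a, ENNReal.ofReal (f a)).toReal := by
  rw [ENNReal.tsum_toReal_eq fun _ ↦ ENNReal.ofReal_ne_top]
  exact tsum_congr fun a ↦ (ENNReal.toReal_ofReal (hf a)).symm

lemma ENNReal.tsum_prod_eq_tsum_sum_antidiagonal (f : ℕ × ℕ → ℝ≥0∞) :
    ∑' p, f p = ∑' n, ∑ p ∈ antidiagonal n, f p := by
  rw [← (HasAntidiagonal.sigmaAntidiagonalEquivProd).tsum_eq, ENNReal.tsum_sigma']
  exact tsum_congr fun n ↦ tsum_subtype (antidiagonal n) f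

lemma hasSum_sub_comp_add_nat {f : ℕ → ℝ} (hf : Antitone f) (hf0 : Tendsto f atTop (𝓝 0))
    (n : ℕ) : HasSum (fun d ↦ f d - f (d + n)) (∑ i ∈ range n, f i) := by
  rw [hasSum_iff_tendsto_nat_of_nonneg fun d ↦ sub_nonneg.2 (hf (Nat.le_add_right d n))]
  have partial_sum : ∀ N, ∑ d ∈ range N, (f d - f (d + n)) =
      ∑ i ∈ range n, f i - ∑ i ∈ range n, f (N + i) := by
    intro N
    have h₁ := sum_range_add f N n
    have h₂ := sum_range_add f n N
    rw [add_comm n N] at h₂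
    simp only [sum_sub_distrib, fun d ↦ add_comm d n]
    linarith
  have tail : Tendsto (fun N ↦ ∑ i ∈ range n, f (N + i)) atTop (𝓝 0) := by
    simpa using tendsto_finsetSum (range n) fun i _ ↦
      (tendsto_add_atTop_iff_nat i).2 hf0
  simpa [partial_sum] using tendsto_const_nhds.sub tail

lemma hasSum_div_mul_add_harmonic (n : ℕ) :
    HasSum (fun d : ℕ ↦ (n : ℝ) / (((d : ℝ) + 1) * ((d : ℝ) + 1 + n))) (harmonic n) := by
  have anti : Antitone fun d : ℕ ↦ 1 / ((d : ℝ) + 1) := fun a b hab ↦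
    one_div_le_one_div_of_le (by positivity) (by gcongr)
  convert hasSum_sub_comp_add_nat anti tendsto_one_div_add_atTop_nhds_zero_nat n using 1
  · funext d
    push_cast
    field_simp
    ring
  · simp [harmonic]

lemma summable_one_div_nat_add_one_pow {s : ℕ} (hs : 1 < s) :
    Summable fun n : ℕ ↦ 1 / ((n : ℝ) + 1) ^ s := by
  simpa using (summable_nat_add_iff 1).2 (Real.summable_one_div_nat_pow.2 hs)

lemma sum_Icc_one_div_pow_mul_pow_add {x y : ℝ} (hx : 0 < x) (hy : 0 < y) {k : ℕ} (hk : 1 ≤ k) :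
    ∑ j ∈ Icc 2 k, 1 / ((x + y) ^ j * x ^ (k + 1 - j)) + 1 / (y * (x + y) ^ k) =
      1 / (y * (x + y) * x ^ (k - 1)) := by
  induction k, hk using Nat.le_induction with
  | base => simp
  | succ k hk ih =>
    have shift : ∑ j ∈ Icc 2 k, 1 / ((x + y) ^ j * x ^ (k + 1 + 1 - j)) =
        (∑ j ∈ Icc 2 k, 1 / ((x + y) ^ j * x ^ (k + 1 - j))) / x := by
      rw [sum_div]
      refine sum_congr rfl fun j hj ↦ ?_
      rw [show k + 1 + 1 - j = k + 1 - j + 1 by grind, pow_succ, div_div, mul_assoc]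
    rw [sum_Icc_succ_top (by omega), shift, eq_sub_of_add_eq ih]
    rw [show k + 1 + 1 - (k + 1) = 1 by omega, show k + 1 - 1 = k - 1 + 1 by omega]
    field_simp
    ring

noncomputable def zetaSeries (s : ℕ) : ℝ≥0∞ :=
  ∑' n : ℕ, ENNReal.ofReal (1 / ((n : ℝ) + 1) ^ s)

/-- The index `(n, d)` stands for the pair `m > n'` with `n' = n + 1` and `m - n' = d + 1`. -/
noncomputable def doubleZetaSeries (a b : ℕ) : ℝ≥0∞ :=
  ∑' q : ℕ × ℕ, ENNReal.ofReal (1 / (((q.1 : ℝ) + 1 + (q.2 + 1)) ^ a * ((q.1 : ℝ) + 1) ^ b))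

section EulerSum

variable {k : ℕ}

lemma tsum_ofReal_one_div_mul_pow_ne_top (hk : 2 ≤ k) :
    ∑' q : ℕ × ℕ, ENNReal.ofReal (1 / (((q.2 : ℝ) + 1) * ((q.1 : ℝ) + 1 + (q.2 + 1)) ^ k)) ≠ ∞ := by
  refine ne_top_of_le_ne_top
    (summable_one_div_nat_add_one_pow one_lt_two).tsum_ofReal_ne_top ?_
  rw [ENNReal.tsum_prod', ENNReal.tsum_comm]
  refine ENNReal.tsum_le_tsum fun d ↦ ?_
  -- with `m = n + d + 2`, the bound `m ^ k ≥ (m - 1) m` makes the sum over `n` telescope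
  have tele : HasSum (fun n : ℕ ↦ 1 / (((d : ℝ) + 1) * ((n : ℝ) + d + 1) * ((n : ℝ) + d + 2)))
      (1 / ((d : ℝ) + 1) ^ 2) := by
    have anti : Antitone fun n : ℕ ↦ 1 / ((n : ℝ) + d + 1) := fun a b hab ↦
      one_div_le_one_div_of_le (by positivity) (by gcongr)
    have lim : Tendsto (fun n : ℕ ↦ 1 / ((n : ℝ) + d + 1)) atTop (𝓝 0) := by
      refine ((tendsto_one_div_add_atTop_nhds_zero_nat (𝕜 := ℝ)).comp
        (tendsto_add_atTop_nat d)).congr fun n ↦ ?_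
      simp
    have := (hasSum_sub_comp_add_nat anti lim 1).mul_left (1 / ((d : ℝ) + 1))
    rw [sum_range_one, Nat.cast_zero, zero_add, one_div_mul_one_div, ← sq] at this
    refine this.congr_fun fun n ↦ ?_
    push_cast
    field_simp
    ring
  rw [← tele.tsum_eq, ENNReal.ofReal_tsum_of_nonneg (fun _ ↦ by positivity) tele.summable]
  refine ENNReal.tsum_le_tsum fun n ↦ ENNReal.ofReal_le_ofReal ?_
  have hm : (1 : ℝ) ≤ n + 1 + (d + 1) := by linarith [(n.cast_nonneg : (0 : ℝ) ≤ n)]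
  have key : ((n : ℝ) + d + 1) * ((n : ℝ) + d + 2) ≤ ((n : ℝ) + 1 + (d + 1)) ^ k :=
    calc ((n : ℝ) + d + 1) * ((n : ℝ) + d + 2) ≤ ((n : ℝ) + 1 + (d + 1)) ^ 2 := by nlinarith
      _ ≤ ((n : ℝ) + 1 + (d + 1)) ^ k := pow_le_pow_right₀ hm hk
  dsimp only
  rw [mul_assoc]
  gcongr

lemma sum_doubleZetaSeries_add_tsum_eq_tsum (hk : 1 ≤ k) :
    ∑ j ∈ Icc 2 k, doubleZetaSeries j (k + 1 - j) +
      ∑' q : ℕ × ℕ, ENNReal.ofReal (1 / (((q.2 : ℝ) + 1) * ((q.1 : ℝ) + 1 + (q.2 + 1)) ^ k)) =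
    ∑' q : ℕ × ℕ, ENNReal.ofReal
      (1 / (((q.2 : ℝ) + 1) * ((q.1 : ℝ) + 1 + (q.2 + 1)) * ((q.1 : ℝ) + 1) ^ (k - 1))) := by
  simp only [doubleZetaSeries]
  rw [← Summable.tsum_finsetSum fun _ _ ↦ ENNReal.summable, ← ENNReal.tsum_add]
  refine tsum_congr fun q ↦ ?_
  rw [← ENNReal.ofReal_sum_of_nonneg fun _ _ ↦ by positivity,
    ← ENNReal.ofReal_add (sum_nonneg fun _ _ ↦ by positivity) (by positivity),
    sum_Icc_one_div_pow_mul_pow_add (by positivity) (by positivity) hk]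

lemma tsum_eq_tsum_harmonic_div (hk : 1 ≤ k) :
    ∑' q : ℕ × ℕ, ENNReal.ofReal
      (1 / (((q.2 : ℝ) + 1) * ((q.1 : ℝ) + 1 + (q.2 + 1)) * ((q.1 : ℝ) + 1) ^ (k - 1))) =
    ∑' n : ℕ, ENNReal.ofReal (harmonic (n + 1) / ((n : ℝ) + 1) ^ k) := by
  rw [ENNReal.tsum_prod']
  refine tsum_congr fun n ↦ ?_
  have row : HasSum (fun d : ℕ ↦
      1 / (((d : ℝ) + 1) * ((n : ℝ) + 1 + (d + 1)) * ((n : ℝ) + 1) ^ (k - 1)))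
      (harmonic (n + 1) / ((n : ℝ) + 1) ^ k) := by
    refine ((hasSum_div_mul_add_harmonic (n + 1)).div_const _).congr_fun fun d ↦ ?_
    obtain ⟨k, rfl⟩ := Nat.exists_eq_add_of_le' hk
    push_cast
    field_simp
    ring
  rw [← ENNReal.ofReal_tsum_of_nonneg (fun _ ↦ by positivity) row.summable, row.tsum_eq]

lemma tsum_eq_tsum_harmonic_div_succ :
    ∑' q : ℕ × ℕ, ENNReal.ofReal (1 / (((q.2 : ℝ) + 1) * ((q.1 : ℝ) + 1 + (q.2 + 1)) ^ k)) =
    ∑' n : ℕ, ENNReal.ofReal (harmonic (n + 1) / ((n : ℝ) + 2) ^ k) := by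
  rw [ENNReal.tsum_prod_eq_tsum_sum_antidiagonal]
  refine tsum_congr fun n ↦ ?_
  rw [← Nat.sum_antidiagonal_swap, Nat.sum_antidiagonal_eq_sum_range_succ_mk,
    ← ENNReal.ofReal_sum_of_nonneg fun _ _ ↦ by positivity]
  congr 1
  simp only [harmonic, Prod.swap]
  push_cast
  rw [sum_div]
  refine sum_congr rfl fun i hi ↦ ?_
  rw [Nat.cast_sub (Nat.lt_succ_iff.mp (mem_range.mp hi)),
    show (n : ℝ) - i + 1 + (i + 1) = n + 2 by ring, one_div, mul_inv, div_eq_mul_inv]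

lemma tsum_harmonic_div_eq_add :
    ∑' n : ℕ, ENNReal.ofReal (harmonic (n + 1) / ((n : ℝ) + 1) ^ k) =
    zetaSeries (k + 1) +
      ∑' n : ℕ, ENNReal.ofReal (harmonic (n + 1) / ((n : ℝ) + 2) ^ k) := by
  have split : ∀ n : ℕ, harmonic (n + 1) / ((n : ℝ) + 1) ^ k =
      1 / ((n : ℝ) + 1) ^ (k + 1) + harmonic n / ((n : ℝ) + 1) ^ k := by
    intro n
    rw [harmonic_succ]
    push_cast
    field_simp
    ring
  have shift : ∑' n : ℕ, ENNReal.ofReal (harmonic n / ((n : ℝ) + 1) ^ k) =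
      ∑' n : ℕ, ENNReal.ofReal (harmonic (n + 1) / ((n : ℝ) + 2) ^ k) := by
    rw [tsum_eq_zero_add' ENNReal.summable]
    push_cast
    simp only [harmonic_zero, Rat.cast_zero, zero_div, ENNReal.ofReal_zero, zero_add]
    ring_nf
  simp_rw [split]
  rw [← shift, zetaSeries, ← ENNReal.tsum_add]
  exact tsum_congr fun n ↦ ENNReal.ofReal_add (by positivity)
    (div_nonneg (Rat.cast_nonneg.2 (sum_nonneg fun _ _ ↦ by positivity)) (by positivity))

theorem sum_doubleZetaSeries_eq_zetaSeries (hk : 2 ≤ k) :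
    ∑ j ∈ Icc 2 k, doubleZetaSeries j (k + 1 - j) = zetaSeries (k + 1) := by
  have h := sum_doubleZetaSeries_add_tsum_eq_tsum (k := k) (by omega)
  rw [tsum_eq_tsum_harmonic_div (by omega), tsum_harmonic_div_eq_add,
    ← tsum_eq_tsum_harmonic_div_succ] at h
  exact (ENNReal.add_left_inj (tsum_ofReal_one_div_mul_pow_ne_top hk)).1 h

end EulerSum

lemma zetaVal_eq_toReal_zetaSeries (s : ℕ) : zetaVal s = (zetaSeries s).toReal := by
  rw [zetaVal, tsum_ite_one_le (fun m : ℕ ↦ 1 / (m : ℝ) ^ s),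
    tsum_eq_toReal_tsum_ofReal fun _ ↦ by positivity]
  push_cast
  rfl

lemma doubleZeta_eq_toReal_doubleZetaSeries (a b : ℕ) :
    doubleZeta a b = (doubleZetaSeries a b).toReal := by
  rw [doubleZeta, tsum_ite_one_le_lt (fun m n : ℕ ↦ 1 / ((m : ℝ) ^ a * (n : ℝ) ^ b)),
    tsum_eq_toReal_tsum_ofReal fun _ ↦ by positivity]
  push_cast
  rfl

theorem sum_doubleZeta_eq_zetaVal {k : ℕ} (hk : 2 ≤ k) :
    ∑ j ∈ Icc 2 k, doubleZeta j (k + 1 - j) = zetaVal (k + 1) := by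
  have euler := sum_doubleZetaSeries_eq_zetaSeries hk
  have finite : zetaSeries (k + 1) ≠ ∞ :=
    (summable_one_div_nat_add_one_pow (by omega)).tsum_ofReal_ne_top
  simp only [doubleZeta_eq_toReal_doubleZetaSeries, zetaVal_eq_toReal_zetaSeries]
  rw [← ENNReal.toReal_sum (ENNReal.sum_ne_top.1 (euler ▸ finite)), euler]

theorem hoffman_depth_one (t : ℝ) (k : ℕ) (hk : 2 ≤ k) :
    (1 + ((k : ℝ) - 1) * t) * zetaVal (k + 1) =
      ∑ j ∈ Finset.Icc 2 k, tDoubleZeta t j (k + 1 - j) := by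
  have weight : ∀ j ∈ Icc 2 k, j + (k + 1 - j) = k + 1 := fun j hj ↦ by grind
  simp only [tDoubleZeta, sum_add_distrib, sum_doubleZeta_eq_zetaVal hk,
    sum_congr rfl fun j hj ↦ congrArg (t * zetaVal ·) (weight j hj), sum_const, Nat.card_Icc,
    nsmul_eq_mul]
  rw [Nat.cast_sub (by omega)]
  push_cast
  ring
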